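/- Let $1<p<N$ and $0\le \mu < \bar\mu = ((N-p)/p)^p$. Then the equation $\gamma^{p-2}[(p-1)\gamma^2-(N-p)\gamma]+\mu=0$ has exactly two roots $\gamma_1,\gamma_2$ in $[0,\infty)$ with $\gamma_1<\gamma_2$, and these satisfy $0\le\gamma_1<\frac{N-p}{p}<\gamma_2\le\frac{N-p}{p-1}$. -/

import Mathlib

/-!
On `[0, ∞)` the left-hand side without `μ` is `g(γ) = (p-1)γ^p - (N-p)γ^(p-1)`, with
`g' = (p-1)γ^(p-2)(pγ - (N-p))`. So `g` decreases from `g 0 = 0` to its minimum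
`-((N-p)/p)^p` at `(N-p)/p` and then increases, vanishing again at `(N-p)/(p-1)`.
For `-((N-p)/p)^p < -μ ≤ 0` the level `-μ` is therefore attained exactly once on each side.
-/

open Real Set

/-- The root equation `γ^(p-2)[(p-1)γ² - (N-p)γ] + μ = 0` for nonnegative `γ`,
with `γ^(p-2)` the real power of a nonnegative real. -/
def rootEq (N p μ γ : ℝ) : Prop :=
  γ ^ (p - 2) * ((p - 1) * γ ^ 2 - (N - p) * γ) + μ = 0

theorem exists_two_eq_of_strictAntiOn_of_strictMonoOn {f : ℝ → ℝ} {a b c y : ℝ}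
    (hac : a ≤ c) (hcb : c ≤ b) (hf : ContinuousOn f (Icc a b))
    (hanti : StrictAntiOn f (Icc a c)) (hmono : StrictMonoOn f (Ici c))
    (hc : f c < y) (ha : y ≤ f a) (hb : y ≤ f b) :
    ∃ x₁ x₂, a ≤ x₁ ∧ x₁ < c ∧ c < x₂ ∧ x₂ ≤ b ∧ f x₁ = y ∧ f x₂ = y ∧
      ∀ x, a ≤ x → f x = y → x = x₁ ∨ x = x₂ := by
  obtain ⟨x₁, ⟨hax₁, hx₁c⟩, hfx₁⟩ :=
    intermediate_value_Icc' hac (hf.mono (Icc_subset_Icc_right hcb)) ⟨hc.le, ha⟩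
  obtain ⟨x₂, ⟨hcx₂, hx₂b⟩, hfx₂⟩ :=
    intermediate_value_Icc hcb (hf.mono (Icc_subset_Icc_left hac)) ⟨hc.le, hb⟩
  have hx₁c' : x₁ < c := hx₁c.lt_of_ne (by rintro rfl; exact hc.ne hfx₁)
  have hcx₂' : c < x₂ := hcx₂.lt_of_ne (by rintro rfl; exact hc.ne hfx₂)
  refine ⟨x₁, x₂, hax₁, hx₁c', hcx₂', hx₂b, hfx₁, hfx₂, fun x hax hfx => ?_⟩
  rcases le_total x c with hxc | hcx
  · exact .inl (hanti.injOn ⟨hax, hxc⟩ ⟨hax₁, hx₁c⟩ (hfx.trans hfx₁.symm))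
  · exact .inr (hmono.injOn hcx hcx₂ (hfx.trans hfx₂.symm))

noncomputable def rootProfile (p a x : ℝ) : ℝ :=
  (p - 1) * x ^ p - a * x ^ (p - 1)

section rootProfile

variable {p : ℝ} (a : ℝ)

theorem rpow_sub_two_mul_sub_eq_rootProfile (hp : 1 < p) {x : ℝ} (hx : 0 ≤ x) :
    x ^ (p - 2) * ((p - 1) * x ^ 2 - a * x) = rootProfile p a x := by
  have hsq : x ^ (p - 2) * x ^ 2 = x ^ p := by
    rw [← rpow_two, ← rpow_add' hx (by linarith)]
    ring_nf
  have hlin : x ^ (p - 2) * x = x ^ (p - 1) := by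
    rw [show p - 1 = p - 2 + 1 by ring, rpow_add_one' hx (by linarith)]
  rw [rootProfile, ← hsq, ← hlin]
  ring

theorem rootProfile_eq_rpow_sub_one_mul (hp : 1 < p) {x : ℝ} (hx : 0 ≤ x) :
    rootProfile p a x = x ^ (p - 1) * ((p - 1) * x - a) := by
  rw [rootProfile, show p = p - 1 + 1 by ring, rpow_add_one' hx (by linarith)]
  ring_nf

theorem rootProfile_zero (hp : 1 < p) : rootProfile p a 0 = 0 := by
  rw [rootProfile, zero_rpow (by linarith), zero_rpow (by linarith)]
  ring

theorem rootProfile_div_sub_one (hp : 1 < p) (ha : 0 ≤ a) :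
    rootProfile p a (a / (p - 1)) = 0 := by
  have hp1 : p - 1 ≠ 0 := by linarith
  rw [rootProfile_eq_rpow_sub_one_mul a hp (div_nonneg ha (by linarith)),
    mul_div_cancel₀ a hp1, sub_self, mul_zero]

theorem rootProfile_div (hp : 1 < p) (ha : 0 ≤ a) :
    rootProfile p a (a / p) = -(a / p) ^ p := by
  have hc : 0 ≤ a / p := div_nonneg ha (by linarith)
  have hcoef : (p - 1) * (a / p) - a = -(a / p) := by
    field_simp
    ring
  rw [rootProfile_eq_rpow_sub_one_mul a hp hc, hcoef, mul_neg,
    ← rpow_add_one' hc (by linarith), sub_add_cancel]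

theorem continuous_rootProfile (hp : 1 ≤ p) : Continuous (rootProfile p a) :=
  ((continuous_rpow_const (by linarith)).const_mul _).sub
    ((continuous_rpow_const (by linarith)).const_mul _)

theorem hasDerivAt_rootProfile {x : ℝ} (hx : 0 < x) :
    HasDerivAt (rootProfile p a) ((p - 1) * x ^ (p - 2) * (p * x - a)) x := by
  have hpow := (hasDerivAt_rpow_const (p := p) (Or.inl hx.ne')).const_mul (p - 1)
  have hpow' := (hasDerivAt_rpow_const (p := p - 1) (Or.inl hx.ne')).const_mul a
  refine (hpow.sub hpow').congr_deriv ?_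
  rw [show p - 1 - 1 = p - 2 by ring, show p - 1 = p - 2 + 1 by ring, rpow_add hx, rpow_one]
  ring

theorem strictAntiOn_rootProfile (hp : 1 < p) :
    StrictAntiOn (rootProfile p a) (Icc 0 (a / p)) := by
  refine strictAntiOn_of_deriv_neg (convex_Icc _ _)
    (continuous_rootProfile a hp.le).continuousOn fun x hx => ?_
  rw [interior_Icc] at hx
  rw [(hasDerivAt_rootProfile a hx.1).deriv]
  have hpx : p * x < a := (lt_div_iff₀' (by linarith)).1 hx.2
  exact mul_neg_of_pos_of_neg (mul_pos (by linarith) (rpow_pos_of_pos hx.1 _)) (by linarith)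

theorem strictMonoOn_rootProfile (hp : 1 < p) (ha : 0 ≤ a) :
    StrictMonoOn (rootProfile p a) (Ici (a / p)) := by
  refine strictMonoOn_of_deriv_pos (convex_Ici _)
    (continuous_rootProfile a hp.le).continuousOn fun x hx => ?_
  rw [interior_Ici] at hx
  have hx0 : 0 < x := (div_nonneg ha (by linarith)).trans_lt hx
  rw [(hasDerivAt_rootProfile a hx0).deriv]
  have hpx : a < p * x := (div_lt_iff₀' (by linarith)).1 hx
  exact mul_pos (mul_pos (by linarith) (rpow_pos_of_pos hx0 _)) (by linarith)

end rootProfile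

theorem rootEq_iff_rootProfile {N p μ γ : ℝ} (hp : 1 < p) (hγ : 0 ≤ γ) :
    rootEq N p μ γ ↔ rootProfile p (N - p) γ = -μ := by
  rw [rootEq, rpow_sub_two_mul_sub_eq_rootProfile _ hp hγ, add_eq_zero_iff_eq_neg]

theorem two_roots (N p μ : ℝ) (hp : 1 < p) (hpN : p < N)
    (hμ0 : 0 ≤ μ) (hμ : μ < ((N - p) / p) ^ p) :
    ∃ γ₁ γ₂ : ℝ, γ₁ < γ₂ ∧
      0 ≤ γ₁ ∧ γ₁ < (N - p) / p ∧ (N - p) / p < γ₂ ∧ γ₂ ≤ (N - p) / (p - 1) ∧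
      rootEq N p μ γ₁ ∧ rootEq N p μ γ₂ ∧
      ∀ γ : ℝ, 0 ≤ γ → rootEq N p μ γ → γ = γ₁ ∨ γ = γ₂ := by
  have ha : 0 ≤ N - p := by linarith
  have hcd : (N - p) / p ≤ (N - p) / (p - 1) :=
    div_le_div_of_nonneg_left ha (by linarith) (by linarith)
  obtain ⟨γ₁, γ₂, h0γ₁, hγ₁c, hcγ₂, hγ₂d, hγ₁, hγ₂, huniq⟩ :=
    exists_two_eq_of_strictAntiOn_of_strictMonoOn (y := -μ) (div_nonneg ha (by linarith)) hcd
      (continuous_rootProfile _ hp.le).continuousOn (strictAntiOn_rootProfile _ hp)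
      (strictMonoOn_rootProfile _ hp ha)
      (by rw [rootProfile_div _ hp ha]; linarith) (by rw [rootProfile_zero _ hp]; linarith)
      (by rw [rootProfile_div_sub_one _ hp ha]; linarith)
  have h0γ₂ : 0 ≤ γ₂ := h0γ₁.trans (hγ₁c.trans hcγ₂).le
  exact ⟨γ₁, γ₂, hγ₁c.trans hcγ₂, h0γ₁, hγ₁c, hcγ₂, hγ₂d,
    (rootEq_iff_rootProfile hp h0γ₁).2 hγ₁, (rootEq_iff_rootProfile hp h0γ₂).2 hγ₂,
    fun γ hγ h => huniq γ hγ ((rootEq_iff_rootProfile hp hγ).1 h)⟩
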